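/- Let G be a weighted graph, H ⊆ G a subgraph, and R ≥ 0. Let P be a shortest path in G, and let e_i = {a_i, b_i}, e_m = {a_m, b_m} be two edges on P with a_i appearing strictly before a_m in the order of P (a-endpoints being the ones closer to the start of P). Suppose there is a vertex s with dist_H(s, a_i) ≤ R·w(e_i) and dist_H(s, a_m) ≤ R·w(e_m), and suppose there is an edge e′ on P lying between a_i and a_m, distinct from e_i, with w(e′) ≥ w(e_m). Then dist_H(a_i, a_m) ≤ R·dist_G(a_i, a_m). -/
import Mathlib


/- Weighted graphs: a `SimpleGraph V` together with a symmetric weight function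
`w : V → V → ℝ≥0` that is positive on edges.  The weight of a walk is the sum of
its edge weights, and `wDist G w u v` is the shortest-path distance in `G`
(`∞` if `u` and `v` are not connected). -/

open scoped ENNReal

noncomputable def walkWeight {V : Type*} {G : SimpleGraph V} (w : V → V → NNReal)
    {u v : V} (p : G.Walk u v) : ℝ≥0∞ :=
  (p.darts.map fun d => (w d.toProd.1 d.toProd.2 : ℝ≥0∞)).sum

/-- Shortest-path distance in `G` w.r.t. the weights `w`. -/
noncomputable def wDist {V : Type*} (G : SimpleGraph V) (w : V → V → NNReal) (u v : V) : ℝ≥0∞ :=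
  ⨅ p : G.Walk u v, walkWeight w p

lemma walkWeight_reverse {V : Type*} {G : SimpleGraph V} (w : V → V → NNReal)
    (hsymm : ∀ u v, w u v = w v u) {u v : V} (p : G.Walk u v) :
    walkWeight w p.reverse = walkWeight w p := by
  unfold walkWeight
  rw [SimpleGraph.Walk.darts_reverse, List.map_reverse, List.sum_reverse, List.map_map]
  congr 1
  apply List.map_congr_left
  intro d _
  simp [SimpleGraph.Dart.symm, hsymm d.toProd.1 d.toProd.2]

lemma wDist_symm {V : Type*} (G : SimpleGraph V) (w : V → V → NNReal)
    (hsymm : ∀ u v, w u v = w v u) (u v : V) :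
    wDist G w u v = wDist G w v u := by
  have h : ∀ a b : V, wDist G w a b ≤ wDist G w b a := by
    intro a b
    refine le_iInf fun p => ?_
    calc wDist G w a b ≤ walkWeight w p.reverse := iInf_le _ _
      _ = walkWeight w p := walkWeight_reverse w hsymm p
  exact le_antisymm (h u v) (h v u)

lemma walkWeight_append {V : Type*} {G : SimpleGraph V} (w : V → V → NNReal)
    {u v x : V} (p : G.Walk u v) (q : G.Walk v x) :
    walkWeight w (p.append q) = walkWeight w p + walkWeight w q := by
  unfold walkWeight
  rw [SimpleGraph.Walk.darts_append, List.map_append, List.sum_append]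

lemma wDist_triangle {V : Type*} (G : SimpleGraph V) (w : V → V → NNReal)
    (u v x : V) : wDist G w u x ≤ wDist G w u v + wDist G w v x := by
  rw [show wDist G w u v + wDist G w v x =
      ⨅ p : G.Walk u v, ⨅ q : G.Walk v x, (walkWeight w p + walkWeight w q) by
    rw [wDist, wDist, ENNReal.iInf_add]
    exact iInf_congr fun p => ENNReal.add_iInf]
  refine le_iInf fun p => le_iInf fun q => ?_
  calc wDist G w u x ≤ walkWeight w (p.append q) := iInf_le _ _
    _ = walkWeight w p + walkWeight w q := walkWeight_append w p q

/-- **Claim (inside Lemma on distinct centers).** Let `H ⊆ G` and `R ≥ 0`.  Let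
`eᵢ = {aᵢ,bᵢ}` and `eₘ = {aₘ,bₘ}` be edges on a shortest path `P`, `aᵢ` strictly before
`aₘ`, let `s` satisfy `dist_H(s,aᵢ) ≤ R·w(eᵢ)` and `dist_H(s,aₘ) ≤ R·w(eₘ)`, and let
`e' = {c,d}` be an edge of `P` between `aᵢ` and `aₘ`, distinct from `eᵢ`, with
`w(e') ≥ w(eₘ)` — so that `dist_G(aᵢ,aₘ) ≥ w(eᵢ) + w(e')`.  Then
`dist_H(aᵢ,aₘ) ≤ R·dist_G(aᵢ,aₘ)`. -/
theorem same_center_twice_gives_shortcut {V : Type*} (G H : SimpleGraph V) (hHG : H ≤ G)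
    (w : V → V → NNReal)
    (hsymm : ∀ u v, w u v = w v u)
    (hpos : ∀ u v, G.Adj u v → 0 < w u v)
    (R : ℕ)
    (ai bi am bm c d s : V)
    (hadji : G.Adj ai bi) (hadjm : G.Adj am bm) (hadj' : G.Adj c d)
    (hs1 : wDist H w s ai ≤ (R : ℝ≥0∞) * (w ai bi : ℝ≥0∞))
    (hs2 : wDist H w s am ≤ (R : ℝ≥0∞) * (w am bm : ℝ≥0∞))
    (hww : w am bm ≤ w c d)
    (hsep : (w ai bi : ℝ≥0∞) + (w c d : ℝ≥0∞) ≤ wDist G w ai am) :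
    wDist H w ai am ≤ (R : ℝ≥0∞) * wDist G w ai am := by
  calc wDist H w ai am ≤ wDist H w ai s + wDist H w s am := wDist_triangle H w ai s am
    _ = wDist H w s ai + wDist H w s am := by rw [wDist_symm H w hsymm]
    _ ≤ (R : ℝ≥0∞) * (w ai bi : ℝ≥0∞) + (R : ℝ≥0∞) * (w am bm : ℝ≥0∞) := add_le_add hs1 hs2
    _ ≤ (R : ℝ≥0∞) * ((w ai bi : ℝ≥0∞) + (w c d : ℝ≥0∞)) := by
        rw [mul_add]
        exact add_le_add le_rfl (mul_le_mul_right (ENNReal.coe_le_coe.mpr hww) _)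
    _ ≤ (R : ℝ≥0∞) * wDist G w ai am := mul_le_mul_right hsep _
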